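/- arXiv:2401.00252 — 2 statements merged into one kernel-verified Lean document; each statement's English description precedes it below -/
import Mathlib

section
/- Let Δ ⊂ ℝ^J be a polytope containing the origin, Δ' = μ_r^T(Δ) its image under the tropicalized cluster mutation in direction r. Suppose Δ ⊆ {u : u_s ≥ 0}, Δ' ⊆ {u : u_s ≥ 0}, and ε_{r,s} ≤ 0. Then the half-space H⁺ = {u : ⟨u, e_s - ε_{r,s} e_r⟩ ≥ 0} is a supporting half-space of Δ, i.e., Δ ⊆ H⁺ and Δ meets the hyperplane {u : ⟨u, e_s - ε_{r,s} e_r⟩ = 0}. -/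
/-- The tropicalized cluster mutation in direction `r`. -/
noncomputable def tropMut {J : Type*} [DecidableEq J] (ε : J → J → ℤ) (r : J)
    (u : J → ℝ) : J → ℝ :=
  fun j => if j = r then -u r
    else if 0 ≤ u r then u j + ((max (ε r j) 0 : ℤ) : ℝ) * u r
    else u j + ((max (-ε r j) 0 : ℤ) : ℝ) * u r

lemma sum_single_pair {J : Type*} [Fintype J] [DecidableEq J] (r s : J) (c : ℝ) (u : J → ℝ) :
    ∑ j, u j * ((Pi.single s 1 : J → ℝ) - c • (Pi.single r 1 : J → ℝ)) j
      = u s - c * u r := by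
  simp only [Pi.sub_apply, Pi.smul_apply, smul_eq_mul, mul_sub, Finset.sum_sub_distrib,
    Pi.single_apply, mul_ite, mul_one, mul_zero, Finset.sum_ite_eq', Finset.mem_univ, if_true]
  ring

/-- let `Δ ⊆ ℝ^J` be a polytope containing the origin with
`Δ' = μ_r^T(Δ)`. If `Δ ⊆ {u | u_s ≥ 0}`, `Δ' ⊆ {u | u_s ≥ 0}` and `ε_{r,s} ≤ 0`, then
the half-space `{u | ⟨u, e_s - ε_{r,s} e_r⟩ ≥ 0}` is a supporting half-space of `Δ`:
`Δ` is contained in it and meets the bounding hyperplane. -/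
theorem stmt_7 {J : Type*} [Fintype J] [DecidableEq J] (ε : J → J → ℤ) (r s : J)
    (Δ : Set (J → ℝ)) (T : Finset (J → ℝ))
    (hΔ : Δ = convexHull ℝ (T : Set (J → ℝ)))
    (h0 : (0 : J → ℝ) ∈ Δ)
    (hs : ∀ u ∈ Δ, 0 ≤ u s)
    (hs' : ∀ u ∈ tropMut ε r '' Δ, 0 ≤ u s)
    (hε : ε r s ≤ 0) :
    (∀ u ∈ Δ,
      0 ≤ ∑ j, u j * ((Pi.single s 1 : J → ℝ) - (ε r s : ℝ) • (Pi.single r 1 : J → ℝ)) j) ∧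
    ∃ u ∈ Δ,
      ∑ j, u j * ((Pi.single s 1 : J → ℝ) - (ε r s : ℝ) • (Pi.single r 1 : J → ℝ)) j = 0 := by
  constructor
  · intro u hu
    rw [sum_single_pair]
    have hεr : (ε r s : ℝ) ≤ 0 := by exact_mod_cast hε
    rcases le_or_gt 0 (u r) with hr | hr
    · have h1 : 0 ≤ u s := hs u hu
      nlinarith
    · -- u r < 0
      have hmem := hs' (tropMut ε r u) ⟨u, hu, rfl⟩
      by_cases hsr : s = r
      · subst hsr
        have := hs u hu
        linarith
      · have : tropMut ε r u s = u s + ((max (-ε r s) 0 : ℤ) : ℝ) * u r := by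
          simp [tropMut, hsr, not_le.mpr hr]
        have hmax : max (-ε r s) 0 = -ε r s := max_eq_left (by linarith)
        rw [this, hmax] at hmem
        push_cast at hmem
        linarith
  · refine ⟨0, h0, ?_⟩
    rw [sum_single_pair]
    simp
end

section
/- Let J = J_uf ⊔ J_fr be a finite index set and ε = (ε_{i,j})_{i∈J_uf, j∈J} an extended skew-symmetrizable integer matrix. If ε is mutation infinite (its mutation equivalence class is infinite) while the restriction ε|_{J_uf} is mutation finite, then for every ℓ ≥ 0 there exists a matrix ε_ℓ = (ε^ℓ_{i,j}) mutation equivalent to ε such that -ε^ℓ_{r,s} ≥ ℓ for some r ∈ J_uf and s ∈ J_fr. -/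
/-- Mutation of an extended exchange matrix (rows indexed by the unfrozen indices,
columns by all indices) in the unfrozen direction `k`. -/
def extMut {Juf Jfr : Type*} [DecidableEq Juf] [DecidableEq Jfr]
    (ε : Juf → Juf ⊕ Jfr → ℤ) (k : Juf) : Juf → Juf ⊕ Jfr → ℤ :=
  fun r s => if r = k ∨ s = Sum.inl k then -ε r s
    else ε r s + (ε k s).sign * max (ε r (Sum.inl k) * ε k s) 0

/-- Mutation of the (square) unfrozen part of an exchange matrix in direction `k`. -/
def sqMut {Juf : Type*} [DecidableEq Juf] (η : Juf → Juf → ℤ) (k : Juf) :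
    Juf → Juf → ℤ :=
  fun r s => if r = k ∨ s = k then -η r s
    else η r s + (η k s).sign * max (η r k * η k s) 0

lemma restrict_extMut {Juf Jfr : Type*} [DecidableEq Juf] [DecidableEq Jfr]
    (ε : Juf → Juf ⊕ Jfr → ℤ) (k : Juf) :
    (fun r s : Juf => extMut ε k r (Sum.inl s)) = sqMut (fun r s => ε r (Sum.inl s)) k := by
  funext r s
  simp only [extMut, sqMut, Sum.inl.injEq]

lemma restrict_foldl {Juf Jfr : Type*} [DecidableEq Juf] [DecidableEq Jfr]
    (ε : Juf → Juf ⊕ Jfr → ℤ) (L : List Juf) :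
    (fun r s : Juf => (L.foldl extMut ε) r (Sum.inl s))
      = L.foldl sqMut (fun r s => ε r (Sum.inl s)) := by
  induction L generalizing ε with
  | nil => rfl
  | cons k L ih =>
    simp only [List.foldl_cons]
    rw [ih, restrict_extMut]

/-- let `ε` be an extended skew-symmetrizable matrix on
`J = J_uf ⊔ J_fr`. If `ε` is mutation infinite while its restriction `ε|_{J_uf}` is
mutation finite, then for every `ℓ` there is a matrix `ε_ℓ` mutation equivalent to `ε`
with `-ε^ℓ_{r,s} ≥ ℓ` for some `r ∈ J_uf` and `s ∈ J_fr`. -/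
theorem stmt_10 {Juf Jfr : Type*} [Fintype Juf] [Fintype Jfr]
    [DecidableEq Juf] [DecidableEq Jfr]
    (ε : Juf → Juf ⊕ Jfr → ℤ)
    (d : Juf ⊕ Jfr → ℤ) (hd : ∀ j, 0 < d j)
    (hskew : ∀ r s : Juf,
      ε r (Sum.inl s) * d (Sum.inl r) + ε s (Sum.inl r) * d (Sum.inl s) = 0)
    (hinf : {ε' | ∃ L : List Juf, ε' = L.foldl extMut ε}.Infinite)
    (hfin : {η | ∃ L : List Juf,
      η = L.foldl sqMut (fun r s : Juf => ε r (Sum.inl s))}.Finite) :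
    ∀ ℓ : ℤ, ∃ (L : List Juf) (r : Juf) (s : Jfr),
      ℓ ≤ -((L.foldl extMut ε) r (Sum.inr s)) := by
  intro ℓ
  by_contra hcon
  push_neg at hcon
  -- hcon : ∀ L r s, -((L.foldl extMut ε) r (Sum.inr s)) < ℓ
  apply hinf
  set g : (Juf → Juf ⊕ Jfr → ℤ) → (Juf → Juf → ℤ) × (Juf → Jfr → ℤ) :=
    fun f => (fun r s => f r (Sum.inl s), fun r s => f r (Sum.inr s)) with hg
  have hginj : Function.Injective g := by
    intro f f' hff
    funext r s
    cases s with
    | inl s => exact congrFun (congrFun (congrArg Prod.fst hff) r) s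
    | inr s => exact congrFun (congrFun (congrArg Prod.snd hff) r) s
  have hCfin : (Set.pi Set.univ (fun _ : Juf => Set.pi Set.univ
      (fun _ : Jfr => Set.Ioo (-ℓ) ℓ))).Finite :=
    Set.Finite.pi (fun _ => Set.Finite.pi (fun _ => Set.finite_Ioo _ _))
  have hfin2 : (g ⁻¹' (({η | ∃ L : List Juf,
      η = L.foldl sqMut (fun r s : Juf => ε r (Sum.inl s))}) ×ˢ
      (Set.pi Set.univ (fun _ : Juf => Set.pi Set.univ
        (fun _ : Jfr => Set.Ioo (-ℓ) ℓ))))).Finite :=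
    Set.Finite.preimage hginj.injOn (hfin.prod hCfin)
  refine Set.Finite.subset hfin2 ?_
  rintro f ⟨L, rfl⟩
  refine ⟨⟨L, ?_⟩, ?_⟩
  · show (fun r s : Juf => (L.foldl extMut ε) r (Sum.inl s)) = _
    exact restrict_foldl ε L
  intro r _
  intro s _
  constructor
  · have := hcon L r s; linarith
  · have h2 := hcon (L ++ [r]) r s
    rw [List.foldl_append] at h2
    simp only [List.foldl_cons, List.foldl_nil, extMut, true_or, if_true] at h2
    linarith
end
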